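/- arXiv:1911.06253 — 3 statements merged into one kernel-verified Lean document; each statement's English description precedes it below -/
import Mathlib

section
/- Let T be a symmetric n×n real matrix with eigenvalues in [0,1], diagonalized as T = VΛVᵀ with V orthogonal. Fix J ≥ 0 and let Ψ_j = p_j(T) for 0 ≤ j ≤ J and Φ = p_{J+1}(T), with p_j as defined above. Then for all x ∈ ℝⁿ, C_J·‖x‖₂² ≤ ∑_{j=0}^{J} ‖Ψ_j x‖₂² + ‖Φ x‖₂² ≤ ‖x‖₂², where C_J = min_{t∈[0,1]}[(1−t)² + t^(2^(J+1))] > 0. -/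
open Matrix

noncomputable def euclNorm {n : ℕ} (x : Fin n → ℝ) : ℝ :=
  ‖(WithLp.equiv 2 (Fin n → ℝ)).symm x‖

/-- The matrix wavelets p_j(T). -/
noncomputable def Pmat {n : ℕ} (J j : ℕ) (T : Matrix (Fin n) (Fin n) ℝ) :
    Matrix (Fin n) (Fin n) ℝ :=
  if j = 0 then 1 - T
  else if j = J + 1 then T ^ (2 ^ J)
  else T ^ (2 ^ (j - 1)) - T ^ (2 ^ j)

/-- C_J = min over [0,1] of (1-t)² + t^(2^(J+1)). -/
noncomputable def CJ (J : ℕ) : ℝ :=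
  sInf ((fun t : ℝ => (1 - t) ^ 2 + t ^ (2 ^ (J + 1))) '' Set.Icc 0 1)

/-- scalar version of the wavelets -/
noncomputable def pf (J j : ℕ) (t : ℝ) : ℝ :=
  if j = 0 then 1 - t
  else if j = J + 1 then t ^ (2 ^ J)
  else t ^ (2 ^ (j - 1)) - t ^ (2 ^ j)

lemma pf_sum (J : ℕ) (t : ℝ) : ∑ j ∈ Finset.range (J + 2), pf J j t = 1 := by
  rw [Finset.sum_range_succ, Finset.sum_range_succ']
  have h0 : pf J 0 t = 1 - t := by simp [pf]
  have h1 : pf J (J + 1) t = t ^ (2 ^ J) := by simp [pf]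
  have h2 : ∀ i ∈ Finset.range J, pf J (i + 1) t = t ^ (2 ^ i) - t ^ (2 ^ (i + 1)) := by
    intro i hi
    simp only [Finset.mem_range] at hi
    have : i + 1 ≠ J + 1 := by omega
    simp [pf, this, show i ≠ J by omega]
  rw [Finset.sum_congr rfl h2, Finset.sum_range_sub' (fun i => t ^ (2 ^ i)), h0, h1]
  simp only [pow_zero, pow_one]
  ring

lemma pf_nonneg (J j : ℕ) {t : ℝ} (h0 : 0 ≤ t) (h1 : t ≤ 1) : 0 ≤ pf J j t := by
  unfold pf
  split
  · linarith
  · split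
    · positivity
    · have : t ^ (2 ^ j) ≤ t ^ (2 ^ (j - 1)) :=
        pow_le_pow_of_le_one h0 h1 (Nat.pow_le_pow_right (by norm_num) (Nat.sub_le j 1))
      linarith

lemma pf_sq_sum_le_one (J : ℕ) {t : ℝ} (h0 : 0 ≤ t) (h1 : t ≤ 1) :
    ∑ j ∈ Finset.range (J + 2), pf J j t ^ 2 ≤ 1 := by
  have hle : ∀ j ∈ Finset.range (J + 2), pf J j t ^ 2 ≤ pf J j t := by
    intro j hj
    have hnn := pf_nonneg J j h0 h1
    have hb : pf J j t ≤ 1 := by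
      calc pf J j t ≤ ∑ k ∈ Finset.range (J + 2), pf J k t :=
            Finset.single_le_sum (fun k _ => pf_nonneg J k h0 h1) hj
        _ = 1 := pf_sum J t
    nlinarith
  calc ∑ j ∈ Finset.range (J + 2), pf J j t ^ 2
      ≤ ∑ j ∈ Finset.range (J + 2), pf J j t := Finset.sum_le_sum hle
    _ = 1 := pf_sum J t

lemma CJ_le_pf_sq_sum (J : ℕ) {t : ℝ} (h0 : 0 ≤ t) (h1 : t ≤ 1) :
    CJ J ≤ ∑ j ∈ Finset.range (J + 2), pf J j t ^ 2 := by
  have hbdd : BddBelow ((fun t : ℝ => (1 - t) ^ 2 + t ^ (2 ^ (J + 1))) '' Set.Icc 0 1) := by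
    refine ⟨0, fun y hy => ?_⟩
    obtain ⟨s, hs, rfl⟩ := hy
    have : 0 ≤ s := hs.1
    positivity
  have hmem : (1 - t) ^ 2 + t ^ (2 ^ (J + 1)) ∈
      ((fun t : ℝ => (1 - t) ^ 2 + t ^ (2 ^ (J + 1))) '' Set.Icc 0 1) :=
    ⟨t, ⟨h0, h1⟩, rfl⟩
  have hCJ : CJ J ≤ (1 - t) ^ 2 + t ^ (2 ^ (J + 1)) := csInf_le hbdd hmem
  have key : (1 - t) ^ 2 + t ^ (2 ^ (J + 1)) ≤ ∑ j ∈ Finset.range (J + 2), pf J j t ^ 2 := by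
    rw [Finset.sum_range_succ]
    have h0' : pf J 0 t = 1 - t := by simp [pf]
    have h1' : pf J (J + 1) t = t ^ (2 ^ J) := by simp [pf]
    have hpow : t ^ (2 ^ (J + 1)) = (t ^ (2 ^ J)) ^ 2 := by
      rw [← pow_mul, pow_succ]
    have hfirst : pf J 0 t ^ 2 ≤ ∑ j ∈ Finset.range (J + 1), pf J j t ^ 2 :=
      Finset.single_le_sum (f := fun j => pf J j t ^ 2)
        (fun k _ => sq_nonneg _) (Finset.mem_range.2 (by omega))
    rw [h1', ← hpow] at *
    nlinarith [hfirst, h0']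
  linarith

section Matrixpart

variable {n : ℕ}

lemma enorm_sq_eq (x : Fin n → ℝ) : euclNorm x ^ 2 = ∑ i, x i ^ 2 := by
  rw [euclNorm, EuclideanSpace.norm_eq, Real.sq_sqrt (by positivity)]
  simp [sq_abs]

lemma unitary_conj_pow (U B : Matrix (Fin n) (Fin n) ℝ) (hU : U * star U = 1) (hU' : star U * U = 1)
    (k : ℕ) : (U * B * star U) ^ k = U * B ^ k * star U := by
  induction k with
  | zero => simp [hU]
  | succ m ih =>
    rw [pow_succ, ih, pow_succ]
    calc U * B ^ m * star U * (U * B * star U)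
        = U * B ^ m * (star U * U) * B * star U := by noncomm_ring
      _ = U * (B ^ m * B) * star U := by rw [hU']; noncomm_ring

end Matrixpart

/-- W² = {p_j(T)}_{0≤j≤J} ∪ {p_{J+1}(T)} is a nonexpansive frame
with lower bound C_J, for T symmetric with spectrum in [0,1]. -/
theorem frame_bounds_W2 {n : ℕ} (J : ℕ) (T : Matrix (Fin n) (Fin n) ℝ)
    (hT : T.IsSymm) (hspec : spectrum ℝ T ⊆ Set.Icc (0 : ℝ) 1) :
    ∀ x : Fin n → ℝ,
      CJ J * euclNorm x ^ 2 ≤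
          (∑ j ∈ Finset.range (J + 1), euclNorm ((Pmat J j T).mulVec x) ^ 2) +
            euclNorm ((Pmat J (J + 1) T).mulVec x) ^ 2 ∧
        (∑ j ∈ Finset.range (J + 1), euclNorm ((Pmat J j T).mulVec x) ^ 2) +
            euclNorm ((Pmat J (J + 1) T).mulVec x) ^ 2 ≤ euclNorm x ^ 2 := by
  intro x
  have hH : T.IsHermitian := by
    rw [Matrix.IsHermitian, Matrix.conjTranspose]
    ext i j
    simpa using hT.apply i j
  set U : Matrix (Fin n) (Fin n) ℝ := (hH.eigenvectorUnitary : Matrix (Fin n) (Fin n) ℝ) with hUdef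
  set d : Fin n → ℝ := hH.eigenvalues with hddef
  have hspect : T = U * Matrix.diagonal d * star U := by
    have := hH.spectral_theorem
    simpa [hUdef, hddef, Function.comp] using this
  have hU' : star U * U = 1 := Matrix.mem_unitaryGroup_iff'.mp (hH.eigenvectorUnitary).2
  have hU : U * star U = 1 := Matrix.mem_unitaryGroup_iff.mp (hH.eigenvectorUnitary).2
  have hd : ∀ i, d i ∈ Set.Icc (0 : ℝ) 1 := fun i =>
    hspec (hH.eigenvalues_mem_spectrum_real i)
  -- Pmat = conjugated diagonal
  have hPmat : ∀ j, Pmat J j T = U * Matrix.diagonal (fun i => pf J j (d i)) * star U := by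
    intro j
    have hpow : ∀ k : ℕ, T ^ k = U * Matrix.diagonal (fun i => d i ^ k) * star U := by
      intro k
      rw [hspect, unitary_conj_pow U _ hU hU' k, Matrix.diagonal_pow]
      rfl
    unfold Pmat pf
    split
    · rw [hspect]
      have : (1 : Matrix (Fin n) (Fin n) ℝ) = U * 1 * star U := by simp [hU]
      rw [this, ← Matrix.sub_mul, ← Matrix.mul_sub, ← Matrix.diagonal_one,
        Matrix.diagonal_sub]
    · split
      · exact hpow _
      · rw [hpow, hpow, ← Matrix.sub_mul, ← Matrix.mul_sub, Matrix.diagonal_sub]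
  -- norms
  set y : Fin n → ℝ := (star U).mulVec x with hydef
  have hnorm_unitary : ∀ w : Fin n → ℝ, ∑ i, (U.mulVec w) i ^ 2 = ∑ i, w i ^ 2 := by
    intro w
    have : (U.mulVec w) ⬝ᵥ (U.mulVec w) = w ⬝ᵥ w := by
      have hTU : Uᵀ * U = 1 := by
        have : star U = Uᵀ := by
          ext i j
          simp [Matrix.star_eq_conjTranspose]
        rw [← this, hU']
      rw [Matrix.dotProduct_mulVec, ← Matrix.vecMul_transpose, Matrix.vecMul_vecMul,
        hTU, Matrix.vecMul_one]
    simpa [dotProduct, sq] using this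
  have hx_eq : euclNorm x ^ 2 = ∑ i, y i ^ 2 := by
    rw [enorm_sq_eq]
    have : ∑ i, y i ^ 2 = ∑ i, (U.mulVec y) i ^ 2 := (hnorm_unitary y).symm
    rw [this, hydef, Matrix.mulVec_mulVec, hU, Matrix.one_mulVec]
  have hterm : ∀ j, euclNorm ((Pmat J j T).mulVec x) ^ 2 = ∑ i, pf J j (d i) ^ 2 * y i ^ 2 := by
    intro j
    rw [enorm_sq_eq, hPmat j]
    rw [← Matrix.mulVec_mulVec, ← Matrix.mulVec_mulVec, ← hydef, hnorm_unitary]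
    congr 1
    ext i
    rw [Matrix.mulVec_diagonal]
    ring
  have hsum : (∑ j ∈ Finset.range (J + 1), euclNorm ((Pmat J j T).mulVec x) ^ 2) +
      euclNorm ((Pmat J (J + 1) T).mulVec x) ^ 2
      = ∑ i, (∑ j ∈ Finset.range (J + 2), pf J j (d i) ^ 2) * y i ^ 2 := by
    have h1 : ∑ j ∈ Finset.range (J + 1), euclNorm ((Pmat J j T).mulVec x) ^ 2
        = ∑ i, (∑ j ∈ Finset.range (J + 1), pf J j (d i) ^ 2) * y i ^ 2 := by
      simp only [hterm, Finset.sum_mul]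
      exact Finset.sum_comm
    rw [h1, hterm, ← Finset.sum_add_distrib]
    refine Finset.sum_congr rfl fun i _ => ?_
    simp only [Finset.sum_range_succ, add_mul]
  constructor
  · rw [hsum, hx_eq, Finset.mul_sum]
    apply Finset.sum_le_sum
    intro i _
    have := CJ_le_pf_sq_sum J (hd i).1 (hd i).2
    exact mul_le_mul_of_nonneg_right this (sq_nonneg _)
  · rw [hsum, hx_eq]
    apply Finset.sum_le_sum
    intro i _
    have := pf_sq_sum_le_one J (hd i).1 (hd i).2
    nlinarith [sq_nonneg (y i)]
end

section
/- Let T̄, T̄' be n×n real matrices with operator norms at most λ₁* < 1. Then ∑_{j=0}^{∞} ‖T̄^(2^j) − (T̄')^(2^j)‖₂² ≤ C·‖T̄ − T̄'‖₂², where C = ∑_{j=0}^{∞} 2^(2j) (λ₁*)^(2^(j+1)−2) < ∞. -/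
open Matrix

noncomputable def opNorm {n : ℕ} (B : Matrix (Fin n) (Fin n) ℝ) : ℝ :=
  ‖Matrix.toEuclideanCLM (𝕜 := ℝ) B‖

lemma pow_mul_norm_le {R : Type*} [NormedRing R] (a : R) (lam : ℝ)
    (ha : ‖a‖ ≤ lam) :
    ∀ (m : ℕ) (c : R), ‖a ^ m * c‖ ≤ lam ^ m * ‖c‖ := by
  intro m
  induction m with
  | zero => intro c; simp
  | succ m ih =>
    intro c
    have h0 : 0 ≤ lam := le_trans (norm_nonneg a) ha
    have : a ^ (m + 1) * c = a ^ m * (a * c) := by rw [pow_succ, mul_assoc]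
    rw [this]
    calc ‖a ^ m * (a * c)‖ ≤ lam ^ m * ‖a * c‖ := ih _
      _ ≤ lam ^ m * (lam * ‖c‖) := by
          exact mul_le_mul_of_nonneg_left
            (le_trans (norm_mul_le _ _)
              (mul_le_mul_of_nonneg_right ha (norm_nonneg c))) (pow_nonneg h0 m)
      _ = lam ^ (m + 1) * ‖c‖ := by ring

lemma pow_sub_pow_norm_le {R : Type*} [NormedRing R] (a b : R) (lam : ℝ)
    (h0 : 0 ≤ lam) (ha : ‖a‖ ≤ lam) (hb : ‖b‖ ≤ lam) :
    ∀ m : ℕ, ‖a ^ m - b ^ m‖ ≤ m * lam ^ (m - 1) * ‖a - b‖ := by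
  intro m
  induction m with
  | zero => simp
  | succ m ih =>
    have key : a ^ (m + 1) - b ^ (m + 1) = a ^ m * (a - b) + (a ^ m - b ^ m) * b := by
      noncomm_ring
    have h2 : ‖(a ^ m - b ^ m) * b‖ ≤ (m * lam ^ (m - 1) * ‖a - b‖) * lam := by
      calc ‖(a ^ m - b ^ m) * b‖ ≤ ‖a ^ m - b ^ m‖ * ‖b‖ := norm_mul_le _ _
        _ ≤ (m * lam ^ (m - 1) * ‖a - b‖) * lam := by
            apply mul_le_mul ih hb (norm_nonneg b)
            positivity
    have h3 : (m : ℝ) * lam ^ (m - 1) * ‖a - b‖ * lam ≤ m * lam ^ m * ‖a - b‖ := by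
      cases m with
      | zero => simp
      | succ k =>
        have : lam ^ (k + 1 - 1) * lam = lam ^ (k + 1) := by
          rw [Nat.add_sub_cancel, ← pow_succ]
        calc (↑(k+1) : ℝ) * lam ^ (k + 1 - 1) * ‖a - b‖ * lam
            = (↑(k+1) : ℝ) * (lam ^ (k + 1 - 1) * lam) * ‖a - b‖ := by ring
          _ = (↑(k+1) : ℝ) * lam ^ (k + 1) * ‖a - b‖ := by rw [this]
          _ ≤ (↑(k+1) : ℝ) * lam ^ (k + 1) * ‖a - b‖ := le_refl _
    calc ‖a ^ (m + 1) - b ^ (m + 1)‖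
        ≤ ‖a ^ m * (a - b)‖ + ‖(a ^ m - b ^ m) * b‖ := by rw [key]; exact norm_add_le _ _
      _ ≤ lam ^ m * ‖a - b‖ + m * lam ^ m * ‖a - b‖ := by
          apply add_le_add (pow_mul_norm_le a lam ha m _) (le_trans h2 h3)
      _ = (↑(m + 1) : ℝ) * lam ^ ((m + 1) - 1) * ‖a - b‖ := by
          push_cast; ring

lemma dyadic_const_summable (lam : ℝ) (h0 : 0 ≤ lam) (hlam : lam < 1) :
    Summable fun j : ℕ => (2 : ℝ) ^ (2 * j) * lam ^ (2 ^ (j + 1) - 2) := by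
  apply summable_of_ratio_norm_eventually_le (r := 1/2) (by norm_num)
  have htend : Filter.Tendsto (fun j : ℕ => 4 * lam ^ (2 ^ (j + 1))) Filter.atTop (nhds 0) := by
    have h1 : Filter.Tendsto (fun j : ℕ => lam ^ (2 ^ (j + 1))) Filter.atTop (nhds 0) := by
      apply (tendsto_pow_atTop_nhds_zero_of_lt_one h0 hlam).comp
      exact (tendsto_pow_atTop_atTop_of_one_lt (by norm_num : 1 < 2)).comp
        (Filter.tendsto_add_atTop_nat 1)
    simpa using h1.const_mul 4
  have hev : ∀ᶠ j : ℕ in Filter.atTop, 4 * lam ^ (2 ^ (j + 1)) ≤ 1 / 2 :=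
    htend.eventually_le_const (show (0:ℝ) < 1/2 by norm_num)
  filter_upwards [hev] with j hj
  have hexp : 2 ^ (j + 1 + 1) - 2 = (2 ^ (j + 1) - 2) + 2 ^ (j + 1) := by
    have h2 : 2 ≤ 2 ^ (j + 1) := by
      calc 2 = 2 ^ 1 := rfl
        _ ≤ 2 ^ (j + 1) := Nat.pow_le_pow_right (by norm_num) (by omega)
    have : (2:ℕ) ^ (j + 1 + 1) = 2 * 2 ^ (j + 1) := by rw [pow_succ]; ring
    omega
  have key : (2 : ℝ) ^ (2 * (j + 1)) * lam ^ (2 ^ (j + 1 + 1) - 2)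
      = (4 * lam ^ (2 ^ (j + 1))) * ((2 : ℝ) ^ (2 * j) * lam ^ (2 ^ (j + 1) - 2)) := by
    rw [hexp, pow_add, pow_add]
    ring
  rw [Real.norm_eq_abs, Real.norm_eq_abs, abs_of_nonneg (by positivity),
    abs_of_nonneg (by positivity), key]
  exact mul_le_mul_of_nonneg_right hj (by positivity)

/-- ∑_j ‖T̄^(2^j) - T̄'^(2^j)‖₂² ≤ C ‖T̄ - T̄'‖₂² with
C = ∑_j 2^(2j) (λ₁*)^(2^(j+1) - 2) < ∞. -/
theorem dyadic_power_diff_sum_bound {n : ℕ}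
    (Tbar Tbar' : Matrix (Fin n) (Fin n) ℝ) (lam : ℝ)
    (h0 : 0 ≤ lam) (h1 : opNorm Tbar ≤ lam) (h2 : opNorm Tbar' ≤ lam)
    (hlam : lam < 1) :
    (Summable fun j : ℕ => (2 : ℝ) ^ (2 * j) * lam ^ (2 ^ (j + 1) - 2)) ∧
      ∑' j : ℕ, opNorm (Tbar ^ (2 ^ j) - Tbar' ^ (2 ^ j)) ^ 2 ≤
        (∑' j : ℕ, (2 : ℝ) ^ (2 * j) * lam ^ (2 ^ (j + 1) - 2)) *
          opNorm (Tbar - Tbar') ^ 2 := by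
  have hc := dyadic_const_summable lam h0 hlam
  refine ⟨hc, ?_⟩
  set a := Matrix.toEuclideanCLM (𝕜 := ℝ) Tbar with ha
  set b := Matrix.toEuclideanCLM (𝕜 := ℝ) Tbar' with hb
  set D : ℝ := opNorm (Tbar - Tbar') with hD
  have hDnn : 0 ≤ D := norm_nonneg _
  have hDeq : D = ‖a - b‖ := by rw [hD, opNorm, map_sub]
  -- per-term bound
  have hterm : ∀ j : ℕ, opNorm (Tbar ^ (2 ^ j) - Tbar' ^ (2 ^ j)) ^ 2 ≤
      (2 : ℝ) ^ (2 * j) * lam ^ (2 ^ (j + 1) - 2) * D ^ 2 := by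
    intro j
    have hmap : opNorm (Tbar ^ (2 ^ j) - Tbar' ^ (2 ^ j)) = ‖a ^ (2 ^ j) - b ^ (2 ^ j)‖ := by
      rw [opNorm, map_sub, map_pow, map_pow]
    have hb1 := pow_sub_pow_norm_le a b lam h0 h1 h2 (2 ^ j)
    rw [← hDeq] at hb1
    have hsq : opNorm (Tbar ^ (2 ^ j) - Tbar' ^ (2 ^ j)) ^ 2 ≤
        ((2 ^ j : ℕ) * lam ^ (2 ^ j - 1) * D) ^ 2 := by
      rw [hmap]
      apply pow_le_pow_left₀ (norm_nonneg _) hb1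
    refine le_trans hsq (le_of_eq ?_)
    have hnat : (2 ^ j - 1) * 2 = 2 ^ (j + 1) - 2 := by
      have h1' : 1 ≤ 2 ^ j := Nat.one_le_two_pow
      have : (2:ℕ) ^ (j + 1) = 2 * 2 ^ j := by rw [pow_succ]; ring
      omega
    have hcoef : (((2:ℕ) ^ j : ℕ) : ℝ) ^ 2 = (2:ℝ) ^ (2 * j) := by
      push_cast
      rw [← pow_mul]
      ring_nf
    rw [mul_pow, mul_pow, ← pow_mul, hnat, hcoef]
  -- summability of the LHS
  have hsum2 : Summable fun j : ℕ => (2 : ℝ) ^ (2 * j) * lam ^ (2 ^ (j + 1) - 2) * D ^ 2 :=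
    hc.mul_right _
  have hsum1 : Summable fun j : ℕ => opNorm (Tbar ^ (2 ^ j) - Tbar' ^ (2 ^ j)) ^ 2 :=
    Summable.of_nonneg_of_le (fun j => by positivity) hterm hsum2
  calc ∑' j : ℕ, opNorm (Tbar ^ (2 ^ j) - Tbar' ^ (2 ^ j)) ^ 2
      ≤ ∑' j : ℕ, (2 : ℝ) ^ (2 * j) * lam ^ (2 ^ (j + 1) - 2) * D ^ 2 :=
        Summable.tsum_le_tsum hterm hsum1 hsum2
    _ = (∑' j : ℕ, (2 : ℝ) ^ (2 * j) * lam ^ (2 ^ (j + 1) - 2)) * D ^ 2 :=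
        tsum_mul_right
end

section
/- Let {Ψ_j}_{j∈J} ∪ {Φ} be n×n matrices forming a frame with upper bound B ≤ 1 in a (possibly weighted) norm ‖·‖: ∑_{j∈J} ‖Ψ_j x‖² + ‖Φx‖² ≤ ‖x‖² for all x. Let M be a nonexpansive map with M0 = 0 and define U[(j₁,...,j_m)]x = MΨ_{j_m}···MΨ_{j₁}x. Then for all m ≥ 1 and all x, ∑_{j∈J^m} ‖U[j]x‖² ≤ ‖x‖². -/
/-- The scattering propagator built from a list of indices:
`scatU Ψ M [j₁, ..., j_m] x = M(Ψ_{j_m} ⋯ M(Ψ_{j₁} x))`. -/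
def scatU {E : Type*} [NormedAddCommGroup E] [NormedSpace ℝ E] {J : Type*}
    (Ψ : J → E →ₗ[ℝ] E) (M : E → E) : List J → E → E
  | [], x => x
  | j :: js, x => scatU Ψ M js (M (Ψ j x))

theorem sum_ofFn_succ {J β : Type*} [Fintype J] [AddCommMonoid β] (m : ℕ) (f : List J → β) :
    ∑ j : Fin (m + 1) → J, f (List.ofFn j) = ∑ j₀ : J, ∑ t : Fin m → J, f (j₀ :: List.ofFn t) := by
  rw [← Fintype.sum_prod_type', ← (Fin.consEquiv fun _ => J).sum_comp]
  simp only [Fin.consEquiv_apply, List.ofFn_succ, Fin.cons_zero, Fin.cons_succ]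

theorem sum_norm_scatU_sq_le {E J : Type*} [NormedAddCommGroup E] [NormedSpace ℝ E]
    [Fintype J] (Ψ : J → E →ₗ[ℝ] E) (M : E → E) (hΨ : ∀ x, ∑ j, ‖Ψ j x‖ ^ 2 ≤ ‖x‖ ^ 2)
    (hM : ∀ x, ‖M x‖ ≤ ‖x‖) (m : ℕ) (x : E) :
    ∑ j : Fin m → J, ‖scatU Ψ M (List.ofFn j) x‖ ^ 2 ≤ ‖x‖ ^ 2 := by
  induction m generalizing x with
  | zero => simp [scatU]
  | succ m ih =>
    calc ∑ j : Fin (m + 1) → J, ‖scatU Ψ M (List.ofFn j) x‖ ^ 2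
        = ∑ j₀ : J, ∑ t : Fin m → J, ‖scatU Ψ M (List.ofFn t) (M (Ψ j₀ x))‖ ^ 2 :=
          sum_ofFn_succ m fun js => ‖scatU Ψ M js x‖ ^ 2
      _ ≤ ∑ j₀ : J, ‖M (Ψ j₀ x)‖ ^ 2 := by gcongr with j₀; exact ih _
      _ ≤ ∑ j₀ : J, ‖Ψ j₀ x‖ ^ 2 := by gcongr with j₀; exact hM _
      _ ≤ ‖x‖ ^ 2 := hΨ x

theorem scattering_nonexpansive_general {E : Type*} [NormedAddCommGroup E]
    [InnerProductSpace ℝ E] {J : Type*} [Fintype J]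
    (Ψ : J → E →ₗ[ℝ] E) (Φ : E →ₗ[ℝ] E)
    (hframe : ∀ x : E, (∑ j, ‖Ψ j x‖ ^ 2) + ‖Φ x‖ ^ 2 ≤ ‖x‖ ^ 2)
    (M : E → E) (hM : ∀ x, ‖M x‖ ≤ ‖x‖) :
    ∀ (m : ℕ), 1 ≤ m → ∀ x : E,
      ∑ j : Fin m → J, ‖scatU Ψ M (List.ofFn j) x‖ ^ 2 ≤ ‖x‖ ^ 2 := by
  have hΨ : ∀ x, ∑ j, ‖Ψ j x‖ ^ 2 ≤ ‖x‖ ^ 2 := fun x =>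
    (le_add_of_nonneg_right (sq_nonneg ‖Φ x‖)).trans (hframe x)
  exact fun m _ => sum_norm_scatU_sq_le Ψ M hΨ hM m

/-- with a nonexpansive frame (upper bound B ≤ 1) and a
nonexpansive pointwise map M with M0 = 0, for all m ≥ 1,
∑_{j ∈ J^m} ‖U[j]x‖² ≤ ‖x‖². -/
theorem scattering_nonexpansive {E : Type*} [NormedAddCommGroup E]
    [InnerProductSpace ℝ E] {J : Type*} [Fintype J]
    (Ψ : J → E →ₗ[ℝ] E) (Φ : E →ₗ[ℝ] E)
    (hframe : ∀ x : E, (∑ j, ‖Ψ j x‖ ^ 2) + ‖Φ x‖ ^ 2 ≤ ‖x‖ ^ 2)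
    (M : E → E) (hM : ∀ x, ‖M x‖ ≤ ‖x‖) (hM0 : M 0 = 0) :
    ∀ (m : ℕ), 1 ≤ m → ∀ x : E,
      ∑ j : Fin m → J, ‖scatU Ψ M (List.ofFn j) x‖ ^ 2 ≤ ‖x‖ ^ 2 :=
  scattering_nonexpansive_general Ψ Φ hframe M hM
end
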